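/- (Theorem 1.2(ii)(b), non-global existence.) Let h, l : [0,∞) → [0,∞) be continuous, and let f, g : [0,∞) → [0,∞) be locally Lipschitz continuous with f(0) = g(0) = 0. Let u₀ ∈ C_b(ℝ^N) be nonnegative with u₀ ≢ 0. Suppose g ∈ Φ and there exists τ > 0 such that ∫_{‖S(τ)u₀‖_∞}^∞ dσ/g(σ) ≤ ∫_0^τ l(σ) dσ. Then there is no global solution of problem (P) with initial data u₀. -/

import Mathlib

open MeasureTheory Real Set Metric Filter

noncomputable section

/-- `ℝ^N`. -/
abbrev EucN (N : ℕ) := EuclideanSpace ℝ (Fin N)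

/-- `C_b(ℝ^N)`, the bounded continuous functions with the sup norm. -/
abbrev CbN (N : ℕ) := BoundedContinuousFunction (EucN N) ℝ

/-- `u` is a global (mild) solution of problem (P)
`u_t - div(ω(x)∇u) = h(t) f(u) + l(t) g(u)`, `u(0) = u₀`, i.e.
`u ∈ C([0,∞), C_b(ℝ^N))`, `u ≥ 0`, and
`u(t) = S(t)u₀ + ∫_0^t S(t-σ)[h(σ) f(u(σ)) + l(σ) g(u(σ))] dσ` for all `t ≥ 0`,
written pointwise via the kernel `Γ`. -/
def IsGlobalSolution (N : ℕ) (Γ : EucN N → EucN N → ℝ → ℝ)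
    (h l f g : ℝ → ℝ) (u₀ : CbN N) (u : ℝ → CbN N) : Prop :=
  ContinuousOn u (Ici (0 : ℝ)) ∧ u 0 = u₀ ∧
    (∀ t : ℝ, 0 ≤ t → ∀ x, 0 ≤ u t x) ∧
    ∀ t : ℝ, 0 < t → ∀ x,
      u t x = (∫ y, Γ x y t * u₀ y) +
        ∫ σ in (0 : ℝ)..t, ∫ y, Γ x y (t - σ) *
          (h σ * f (u σ y) + l σ * g (u σ y))

open scoped BoundedContinuousFunction

/-!
If `u` were global, fix `x` and follow the backward characteristic `z(t) = S(τ - t) u(t) (x)`,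
`0 ≤ t ≤ τ`. The Chapman–Kolmogorov equation turns the Duhamel formula into
`z(t) = S(τ)u₀(x) + ∫₀ᵗ S(τ - σ)[h f(u) + l g(u)](σ)(x) dσ`, and Jensen's inequality for `g`
(the property `g ∈ Φ`) gives `z(t) ≥ w(t) := S(τ)u₀(x) + ∫₀ᵗ l g(z)`. Since `g` is nondecreasing,
`w' = l g(z) ≥ l g(w)`, and separating variables yields
`∫₀^τ l ≤ ∫_{S(τ)u₀(x)}^{u(τ)(x)} dσ / g(σ)`. Together with the blow-up condition this says that
`∫_{‖S(τ)u₀‖}^∞ 1/g ≤ ∫_{S(τ)u₀(x)}^{‖u(τ)‖} 1/g` for every `x`, which fails when `S(τ)u₀(x)` is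
close to `‖S(τ)u₀‖`, because the tail of `1/g` beyond `max ‖u(τ)‖ ‖S(τ)u₀‖` is positive.
-/

theorem BoundedContinuousFunction.exists_norm_sub_lt_apply {X : Type*} [TopologicalSpace X]
    [Nonempty X] {f : X →ᵇ ℝ} (hf : ∀ x, 0 ≤ f x) {δ : ℝ} (hδ : 0 < δ) :
    ∃ x, ‖f‖ - δ < f x := by
  by_contra! h
  have : ‖f‖ ≤ ‖f‖ - δ := norm_le_of_nonempty.2 fun x => by
    rw [Real.norm_eq_abs, abs_of_nonneg (hf x)]
    exact h x
  linarith

theorem continuousOn_Ici_of_lipschitzOnWith_Icc {f : ℝ → ℝ}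
    (hf : ∀ M > (0 : ℝ), ∃ K : NNReal, LipschitzOnWith K f (Icc 0 M)) :
    ContinuousOn f (Ici 0) := by
  intro s hs
  obtain ⟨K, hK⟩ := hf (s + 1) (by linarith [mem_Ici.1 hs])
  refine (hK.continuousOn s ⟨hs, by linarith⟩).mono_of_mem_nhdsWithin ?_
  rw [← Ici_inter_Iic]
  exact inter_mem_nhdsWithin _ (Iic_mem_nhds (by linarith))

theorem integral_le_setIntegral_inv_of_add_integral_le {g l z : ℝ → ℝ} {a τ : ℝ} (ha : 0 < a)
    (hτ : 0 ≤ τ) (hg : ContinuousOn g (Ici 0)) (hg0 : ∀ s, 0 ≤ s → 0 ≤ g s)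
    (hgmono : MonotoneOn g (Ici 0)) (hgpos : ∀ s > (0 : ℝ), 0 < g s)
    (hl : ContinuousOn l (Icc 0 τ)) (hl0 : ∀ t ∈ Icc 0 τ, 0 ≤ l t)
    (hz : ContinuousOn z (Icc 0 τ)) (hz0 : ∀ t ∈ Icc 0 τ, 0 ≤ z t)
    (hlz : ∀ t ∈ Icc 0 τ, a + ∫ σ in 0..t, l σ * g (z σ) ≤ z t) :
    ∫ σ in 0..τ, l σ ≤ ∫ s in Ioc a (z τ), 1 / g s := by
  set ψ : ℝ → ℝ := fun σ => l σ * g (z σ)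
  set w : ℝ → ℝ := fun t => a + ∫ σ in 0..t, ψ σ
  have hIcc : uIcc 0 τ = Icc 0 τ := uIcc_of_le hτ
  have hIoo : Ioo (min 0 τ) (max 0 τ) = Ioo 0 τ := by rw [min_eq_left hτ, max_eq_right hτ]
  have hψ : ContinuousOn ψ (Icc 0 τ) := hl.mul (hg.comp hz fun t ht => hz0 t ht)
  have hψ0 : ∀ t ∈ Icc 0 τ, 0 ≤ ψ t := fun t ht => mul_nonneg (hl0 t ht) (hg0 _ (hz0 t ht))
  have hw : ContinuousOn w (Icc 0 τ) := by
    have := intervalIntegral.continuousOn_primitive_interval (a := 0) (b := τ) (μ := volume)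
      (hIcc ▸ hψ.integrableOn_Icc)
    exact continuousOn_const.add (hIcc ▸ this)
  have hw' : ∀ t ∈ Ioo 0 τ, HasDerivAt w (ψ t) t := fun t ht =>
    (intervalIntegral.integral_hasDerivAt_right
      ((hψ.mono (Icc_subset_Icc le_rfl ht.2.le)).intervalIntegrable_of_Icc ht.1.le)
      ((hψ.mono Ioo_subset_Icc_self).stronglyMeasurableAtFilter isOpen_Ioo t ht)
      ((hψ.mono Ioo_subset_Icc_self).continuousAt (Ioo_mem_nhds ht.1 ht.2))).const_add a
  have hwa : ∀ t ∈ Icc 0 τ, a ≤ w t := fun t ht =>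
    le_add_of_nonneg_right (intervalIntegral.integral_nonneg ht.1 fun σ hσ =>
      hψ0 σ ⟨hσ.1, hσ.2.trans ht.2⟩)
  have hwτ : a ≤ w τ := hwa τ ⟨hτ, le_rfl⟩
  have hzτ : w τ ≤ z τ := hlz τ ⟨hτ, le_rfl⟩
  have hinv : ContinuousOn (fun s => 1 / g s) (Ici a) :=
    continuousOn_const.div (hg.mono fun s hs => ha.le.trans hs) fun s hs =>
      (hgpos s (ha.trans_le hs)).ne'
  -- `w' = l g(z) ≥ l g(w)` because `w ≤ z`; divide by `g(w)` and substitute `s = w(σ)`.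
  calc ∫ σ in 0..τ, l σ
      ≤ ∫ σ in 0..τ, ((fun s => 1 / g s) ∘ w) σ * ψ σ := by
        refine intervalIntegral.integral_mono_on hτ (hl.intervalIntegrable_of_Icc hτ)
          (((hinv.comp hw hwa).mul hψ).intervalIntegrable_of_Icc hτ) fun σ hσ => ?_
        have hwσ : 0 < w σ := ha.trans_le (hwa σ hσ)
        rw [Function.comp_apply, one_div, inv_mul_eq_div, le_div_iff₀ (hgpos _ hwσ)]
        exact mul_le_mul_of_nonneg_left (hgmono hwσ.le (hz0 σ hσ) (hlz σ hσ)) (hl0 σ hσ)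
    _ = ∫ s in a..w τ, 1 / g s := by
        rw [intervalIntegral.integral_comp_mul_deriv_of_deriv_nonneg (hIcc ▸ hw)
          (fun t ht => hw' t (hIoo ▸ ht)) (fun t ht => hψ0 t (Ioo_subset_Icc_self (hIoo ▸ ht)))]
        simp [w]
    _ ≤ ∫ s in Ioc a (z τ), 1 / g s := by
        rw [intervalIntegral.integral_of_le hwτ]
        refine setIntegral_mono_set
          ((hinv.mono Icc_subset_Ici_self).integrableOn_Icc.mono_set Ioc_subset_Icc_self) ?_
          (Ioc_subset_Ioc_right hzτ).eventuallyLE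
        exact ae_restrict_of_forall_mem measurableSet_Ioc fun s hs =>
          one_div_nonneg.2 (hgpos s (ha.trans hs.1)).le

theorem exists_forall_setIntegral_Ioc_lt_setIntegral_Ioi {g : ℝ → ℝ}
    (hgmono : MonotoneOn g (Ici 0)) (hgpos : ∀ s > (0 : ℝ), 0 < g s)
    (hg : ∀ z > (0 : ℝ), IntegrableOn (fun σ => 1 / g σ) (Ioi z)) {b : ℝ} (hb : 0 < b) (M : ℝ) :
    ∃ δ > 0, ∀ a ∈ Ioc (b - δ) b, ∀ c ≤ M,
      ∫ s in Ioc a c, 1 / g s < ∫ s in Ioi b, 1 / g s := by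
  set M' := max M b
  have hbM' : b ≤ M' := le_max_right M b
  have hinv_pos : ∀ s > (0 : ℝ), 0 < 1 / g s := fun s hs => one_div_pos.2 (hgpos s hs)
  set γ := ∫ s in Ioi M', 1 / g s
  have hγ : 0 < γ := by
    rw [setIntegral_pos_iff_support_of_nonneg_ae (ae_restrict_of_forall_mem measurableSet_Ioi
      fun s hs => (hinv_pos s (hb.trans_le (hbM'.trans hs.le))).le) (hg M' (hb.trans_le hbM'))]
    have hsub : Ioi M' ⊆ Function.support (fun s => 1 / g s) ∩ Ioi M' := fun s hs =>
      ⟨(hinv_pos s (hb.trans_le (hbM'.trans hs.le))).ne', hs⟩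
    exact (measure_mono hsub).trans_lt' (by simp)
  have hgb : 0 < g (b / 2) := hgpos _ (half_pos hb)
  -- Once `a > b / 2`, the piece `∫_a^b 1/g ≤ (b - a) / g(b/2)` is smaller than the tail `γ`.
  refine ⟨min (b / 2) (g (b / 2) * γ), lt_min (half_pos hb) (mul_pos hgb hγ), ?_⟩
  rintro a ⟨hδa, hab⟩ c hc
  have ha : b / 2 < a := by linarith [min_le_left (b / 2) (g (b / 2) * γ)]
  have ha0 : 0 < a := (half_pos hb).trans ha
  have hint : IntegrableOn (fun s => 1 / g s) (Ioi a) := hg a ha0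
  have hnonneg : ∀ s ∈ Ioi a, 0 ≤ 1 / g s := fun s hs => (hinv_pos s (ha0.trans hs)).le
  have hsplit_a :
      ∫ s in Ioc a M', 1 / g s = (∫ s in Ioc a b, 1 / g s) + ∫ s in Ioc b M', 1 / g s := by
    rw [← setIntegral_union (Ioc_disjoint_Ioc_of_le le_rfl) measurableSet_Ioc
      (hint.mono_set Ioc_subset_Ioi_self)
      (hint.mono_set fun s hs => hab.trans_lt hs.1), Ioc_union_Ioc_eq_Ioc hab hbM']
  have hsplit_b : ∫ s in Ioi b, 1 / g s = (∫ s in Ioc b M', 1 / g s) + γ := by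
    rw [← setIntegral_union (Ioc_disjoint_Ioi le_rfl) measurableSet_Ioi
      ((hg b hb).mono_set Ioc_subset_Ioi_self) ((hg b hb).mono_set (Ioi_subset_Ioi hbM')),
      Ioc_union_Ioi_eq_Ioi hbM']
  have hmono : ∫ s in Ioc a c, 1 / g s ≤ ∫ s in Ioc a M', 1 / g s :=
    setIntegral_mono_set (hint.mono_set Ioc_subset_Ioi_self)
      (ae_restrict_of_forall_mem measurableSet_Ioc fun s hs => hnonneg s hs.1)
      (Ioc_subset_Ioc_right (hc.trans (le_max_left M b))).eventuallyLE
  have hshort : ∫ s in Ioc a b, 1 / g s ≤ 1 / g (b / 2) * (b - a) := by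
    have := norm_setIntegral_le_of_norm_le_const (f := fun s => 1 / g s) (C := 1 / g (b / 2))
      (measure_Ioc_lt_top (μ := volume) (a := a) (b := b)) fun s hs => by
        rw [Real.norm_eq_abs, abs_of_nonneg (hnonneg s hs.1)]
        exact one_div_le_one_div_of_le hgb (hgmono (half_pos hb).le
          (ha0.trans hs.1).le (ha.trans hs.1).le)
    rw [volume_real_Ioc_of_le hab] at this
    exact (le_abs_self _).trans this
  have hsmall : 1 / g (b / 2) * (b - a) < γ := by
    rw [one_div_mul_eq_div, div_lt_iff₀ hgb]
    linarith [min_le_right (b / 2) (g (b / 2) * γ)]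
  linarith

section Kernel

variable {X : Type*} [MeasurableSpace X] {μ : Measure X}

structure IsTransitionDensity (μ : Measure X) (Γ : X → X → ℝ → ℝ) : Prop where
  measurable : Measurable fun p : X × X × ℝ => Γ p.1 p.2.1 p.2.2
  pos : ∀ x y t, 0 < t → 0 < Γ x y t
  integral_eq_one : ∀ x t, 0 < t → ∫ y, Γ x y t ∂μ = 1
  chapman_kolmogorov : ∀ x y s t, 0 < s → s < t → Γ x y t = ∫ ξ, Γ x ξ (t - s) * Γ ξ y s ∂μ

def kernelAverage (μ : Measure X) (Γ : X → X → ℝ → ℝ) (t : ℝ) (φ : X → ℝ) (x : X) : ℝ :=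
  ∫ y, Γ x y t * φ y ∂μ

theorem kernelAverage_const_mul (Γ : X → X → ℝ → ℝ) (t c : ℝ) (φ : X → ℝ) (x : X) :
    kernelAverage μ Γ t (fun y => c * φ y) x = c * kernelAverage μ Γ t φ x := by
  simp only [kernelAverage, ← integral_const_mul]
  congr 1 with y
  ring

namespace IsTransitionDensity

variable {Γ : X → X → ℝ → ℝ} {t C : ℝ} {φ ψ : X → ℝ}

theorem measurable_comp (hΓ : IsTransitionDensity μ Γ) {α : Type*} [MeasurableSpace α]
    {a b : α → X} {c : α → ℝ} (ha : Measurable a) (hb : Measurable b) (hc : Measurable c) :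
    Measurable fun q => Γ (a q) (b q) (c q) :=
  hΓ.measurable.comp (ha.prodMk (hb.prodMk hc))

theorem nonneg (hΓ : IsTransitionDensity μ Γ) (x y : X) (ht : 0 < t) : 0 ≤ Γ x y t :=
  (hΓ.pos x y t ht).le

theorem integrable (hΓ : IsTransitionDensity μ Γ) (x : X) (ht : 0 < t) :
    Integrable (fun y => Γ x y t) μ :=
  integrable_of_integral_eq_one (hΓ.integral_eq_one x t ht)

theorem integrable_mul (hΓ : IsTransitionDensity μ Γ) (x : X) (ht : 0 < t)
    (hφ : AEStronglyMeasurable φ μ) (hφC : ∀ y, |φ y| ≤ C) :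
    Integrable (fun y => Γ x y t * φ y) μ := by
  refine ((hΓ.integrable x ht).mul_const C).mono'
    ((hΓ.measurable_comp measurable_const measurable_id measurable_const).aestronglyMeasurable.mul
      hφ) (ae_of_all _ fun y => ?_)
  rw [Real.norm_eq_abs, abs_mul, abs_of_nonneg (hΓ.nonneg x y ht)]
  exact mul_le_mul_of_nonneg_left (hφC y) (hΓ.nonneg x y ht)

theorem abs_kernelAverage_le (hΓ : IsTransitionDensity μ Γ) (x : X) (ht : 0 < t)
    (hφ : AEStronglyMeasurable φ μ) (hφC : ∀ y, |φ y| ≤ C) :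
    |kernelAverage μ Γ t φ x| ≤ C :=
  calc |kernelAverage μ Γ t φ x| ≤ ∫ y, |Γ x y t * φ y| ∂μ := abs_integral_le_integral_abs
    _ ≤ ∫ y, Γ x y t * C ∂μ := by
      refine integral_mono (hΓ.integrable_mul x ht hφ hφC).abs
        ((hΓ.integrable x ht).mul_const C) fun y => ?_
      rw [abs_mul, abs_of_nonneg (hΓ.nonneg x y ht)]
      exact mul_le_mul_of_nonneg_left (hφC y) (hΓ.nonneg x y ht)
    _ = C := by rw [integral_mul_const, hΓ.integral_eq_one x t ht, one_mul]

theorem kernelAverage_nonneg (hΓ : IsTransitionDensity μ Γ) (ht : 0 < t) (hφ : ∀ y, 0 ≤ φ y)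
    (x : X) : 0 ≤ kernelAverage μ Γ t φ x :=
  integral_nonneg fun y => mul_nonneg (hΓ.nonneg x y ht) (hφ y)

theorem kernelAverage_mono (hΓ : IsTransitionDensity μ Γ) (x : X) (ht : 0 < t) {C' : ℝ}
    (hφ : AEStronglyMeasurable φ μ) (hφC : ∀ y, |φ y| ≤ C)
    (hψ : AEStronglyMeasurable ψ μ) (hψC : ∀ y, |ψ y| ≤ C') (hφψ : ∀ y, φ y ≤ ψ y) :
    kernelAverage μ Γ t φ x ≤ kernelAverage μ Γ t ψ x :=
  integral_mono (hΓ.integrable_mul x ht hφ hφC) (hΓ.integrable_mul x ht hψ hψC) fun y =>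
    mul_le_mul_of_nonneg_left (hφψ y) (hΓ.nonneg x y ht)

theorem kernelAverage_add (hΓ : IsTransitionDensity μ Γ) (x : X) (ht : 0 < t) {C' : ℝ}
    (hφ : AEStronglyMeasurable φ μ) (hφC : ∀ y, |φ y| ≤ C)
    (hψ : AEStronglyMeasurable ψ μ) (hψC : ∀ y, |ψ y| ≤ C') :
    kernelAverage μ Γ t (fun y => φ y + ψ y) x =
      kernelAverage μ Γ t φ x + kernelAverage μ Γ t ψ x := by
  simp only [kernelAverage, mul_add]
  exact integral_add (hΓ.integrable_mul x ht hφ hφC) (hΓ.integrable_mul x ht hψ hψC)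

theorem kernelAverage_sub (hΓ : IsTransitionDensity μ Γ) (x : X) (ht : 0 < t) {C' : ℝ}
    (hφ : AEStronglyMeasurable φ μ) (hφC : ∀ y, |φ y| ≤ C)
    (hψ : AEStronglyMeasurable ψ μ) (hψC : ∀ y, |ψ y| ≤ C') :
    kernelAverage μ Γ t (fun y => φ y - ψ y) x =
      kernelAverage μ Γ t φ x - kernelAverage μ Γ t ψ x := by
  simp only [kernelAverage, mul_sub]
  exact integral_sub (hΓ.integrable_mul x ht hφ hφC) (hΓ.integrable_mul x ht hψ hψC)

theorem kernelAverage_pos (hΓ : IsTransitionDensity μ Γ) (x : X) (ht : 0 < t)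
    (hφ : AEStronglyMeasurable φ μ) (hφC : ∀ y, |φ y| ≤ C) (hφ0 : ∀ y, 0 ≤ φ y)
    (hsupp : μ (Function.support φ) ≠ 0) : 0 < kernelAverage μ Γ t φ x := by
  rw [kernelAverage, integral_pos_iff_support_of_nonneg
    (fun y => mul_nonneg (hΓ.nonneg x y ht) (hφ0 y)) (hΓ.integrable_mul x ht hφ hφC)]
  refine hsupp.bot_lt.trans_le (measure_mono fun y hy => ?_)
  exact mul_ne_zero (hΓ.pos x y t ht).ne' hy

variable [SFinite μ]

theorem measurable_kernelAverage (hΓ : IsTransitionDensity μ Γ) {α : Type*} [MeasurableSpace α]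
    {F : α → X → ℝ} (hF : Measurable (Function.uncurry F)) {T : α → ℝ} (hT : Measurable T) :
    Measurable fun p : α × X => kernelAverage μ Γ (T p.1) (F p.1) p.2 :=
  ((hΓ.measurable_comp (measurable_snd.comp measurable_fst) measurable_snd
    (hT.comp (measurable_fst.comp measurable_fst))).mul
      (hF.comp ((measurable_fst.comp measurable_fst).prodMk measurable_snd))).stronglyMeasurable
    |>.integral_prod_right'.measurable

theorem measurable_kernelAverage_apply (hΓ : IsTransitionDensity μ Γ) (hφ : Measurable φ) :
    Measurable (kernelAverage μ Γ t φ) :=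
  ((hΓ.measurable_comp measurable_fst measurable_snd measurable_const).mul
    (hφ.comp measurable_snd)).stronglyMeasurable.integral_prod_right'.measurable

theorem kernelAverage_kernelAverage (hΓ : IsTransitionDensity μ Γ) (hφ : Measurable φ)
    (hφC : ∀ y, |φ y| ≤ C) {s : ℝ} (hs : 0 < s) (hst : s < t) (x : X) :
    kernelAverage μ Γ (t - s) (kernelAverage μ Γ s φ) x = kernelAverage μ Γ t φ x := by
  have hts : 0 < t - s := sub_pos.2 hst
  have hmeas : Measurable fun p : X × X => Γ x p.1 (t - s) * (Γ p.1 p.2 s * φ p.2) :=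
    (hΓ.measurable_comp measurable_const measurable_fst measurable_const).mul
      ((hΓ.measurable_comp measurable_fst measurable_snd measurable_const).mul
        (hφ.comp measurable_snd))
  have hint : Integrable (Function.uncurry fun y ξ => Γ x y (t - s) * (Γ y ξ s * φ ξ))
      (μ.prod μ) := by
    refine (integrable_prod_iff hmeas.aestronglyMeasurable).2
      ⟨ae_of_all _ fun y =>
        (hΓ.integrable_mul y hs hφ.aestronglyMeasurable hφC).const_mul (Γ x y (t - s)),
        ((hΓ.integrable x hts).mul_const C).mono'
          hmeas.norm.stronglyMeasurable.integral_prod_right'.aestronglyMeasurable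
          (ae_of_all _ fun y => ?_)⟩
    have hnorm : ∀ ξ, ‖Γ x y (t - s) * (Γ y ξ s * φ ξ)‖ = Γ x y (t - s) * (Γ y ξ s * |φ ξ|) :=
      fun ξ => by
        rw [Real.norm_eq_abs, abs_mul, abs_mul, abs_of_nonneg (hΓ.nonneg x y hts),
          abs_of_nonneg (hΓ.nonneg y ξ hs)]
    simp only [hnorm, integral_const_mul, Real.norm_eq_abs]
    change |Γ x y (t - s) * kernelAverage μ Γ s (fun ξ => |φ ξ|) y| ≤ _
    rw [abs_of_nonneg (mul_nonneg (hΓ.nonneg x y hts)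
      (hΓ.kernelAverage_nonneg hs (fun ξ => abs_nonneg (φ ξ)) y))]
    exact mul_le_mul_of_nonneg_left
      (le_of_abs_le (hΓ.abs_kernelAverage_le y hs hφ.abs.aestronglyMeasurable
        (fun ξ => (abs_abs (φ ξ)).le.trans (hφC ξ)))) (hΓ.nonneg x y hts)
  calc kernelAverage μ Γ (t - s) (kernelAverage μ Γ s φ) x
      = ∫ y, ∫ ξ, Γ x y (t - s) * (Γ y ξ s * φ ξ) ∂μ ∂μ := by
        simp only [kernelAverage, integral_const_mul]
    _ = ∫ ξ, (∫ y, Γ x y (t - s) * Γ y ξ s ∂μ) * φ ξ ∂μ := by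
        rw [integral_integral_swap hint]
        simp only [← integral_mul_const, mul_assoc]
    _ = kernelAverage μ Γ t φ x := by
        simp only [kernelAverage, ← hΓ.chapman_kolmogorov x _ s t hs hst]

theorem kernelAverage_integral_comm (hΓ : IsTransitionDensity μ Γ) {α : Type*}
    [MeasurableSpace α] {ν : Measure α} [IsFiniteMeasure ν] {c : α → X → ℝ}
    (hc : Measurable (Function.uncurry c)) (hcC : ∀ᵐ σ ∂ν, ∀ y, |c σ y| ≤ C) (ht : 0 < t)
    (x : X) :
    kernelAverage μ Γ t (fun y => ∫ σ, c σ y ∂ν) x = ∫ σ, kernelAverage μ Γ t (c σ) x ∂ν := by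
  have hmeas : Measurable fun p : X × α => Γ x p.1 t * c p.2 p.1 :=
    (hΓ.measurable_comp measurable_const measurable_fst measurable_const).mul
      (hc.comp measurable_swap)
  have hint : Integrable (Function.uncurry fun y σ => Γ x y t * c σ y) (μ.prod ν) := by
    refine (integrable_prod_iff' hmeas.aestronglyMeasurable).2
      ⟨hcC.mono fun σ hσ => hΓ.integrable_mul x ht hc.of_uncurry_left.aestronglyMeasurable hσ,
        .of_bound hmeas.norm.stronglyMeasurable.integral_prod_left'.aestronglyMeasurable C
          (hcC.mono fun σ hσ => ?_)⟩
    have hnorm : ∀ y, ‖Γ x y t * c σ y‖ = Γ x y t * |c σ y| := fun y => by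
      rw [Real.norm_eq_abs, abs_mul, abs_of_nonneg (hΓ.nonneg x y ht)]
    simp only [hnorm, Real.norm_eq_abs]
    exact hΓ.abs_kernelAverage_le x ht hc.of_uncurry_left.abs.aestronglyMeasurable
      (fun y => (abs_abs (c σ y)).le.trans (hσ y))
  simp only [kernelAverage, ← integral_const_mul]
  exact integral_integral_swap hint

theorem kernelAverage_duhamel (hΓ : IsTransitionDensity μ Γ) (hφ : Measurable φ)
    (hφC : ∀ y, |φ y| ≤ C) {F : ℝ → X → ℝ} (hF : Measurable (Function.uncurry F)) {M τ : ℝ}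
    (hFM : ∀ σ ∈ Ioo 0 t, ∀ y, |F σ y| ≤ M) (ht : 0 < t) (htτ : t < τ) (x : X) :
    kernelAverage μ Γ (τ - t)
        (fun y => kernelAverage μ Γ t φ y + ∫ σ in 0..t, kernelAverage μ Γ (t - σ) (F σ) y) x =
      kernelAverage μ Γ τ φ x + ∫ σ in 0..t, kernelAverage μ Γ (τ - σ) (F σ) x := by
  have hτt : 0 < τ - t := sub_pos.2 htτ
  set c : ℝ → X → ℝ := fun σ => kernelAverage μ Γ (t - σ) (F σ)
  have hc : Measurable (Function.uncurry c) :=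
    hΓ.measurable_kernelAverage hF (measurable_const.sub measurable_id)
  have hcM : ∀ σ ∈ Ioo 0 t, ∀ y, |c σ y| ≤ M := fun σ hσ y =>
    hΓ.abs_kernelAverage_le y (sub_pos.2 hσ.2) hF.of_uncurry_left.aestronglyMeasurable (hFM σ hσ)
  simp only [intervalIntegral.integral_of_le ht.le, integral_Ioc_eq_integral_Ioo]
  rw [hΓ.kernelAverage_add x hτt (hΓ.measurable_kernelAverage_apply hφ).aestronglyMeasurable
      (fun y => hΓ.abs_kernelAverage_le y ht hφ.aestronglyMeasurable hφC)
      hc.stronglyMeasurable.integral_prod_left.aestronglyMeasurable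
      (fun y => norm_setIntegral_le_of_norm_le_const (f := (c · y)) measure_Ioo_lt_top
        (hcM · · y)),
    hΓ.kernelAverage_kernelAverage hφ hφC ht htτ,
    hΓ.kernelAverage_integral_comm hc (ae_restrict_of_forall_mem measurableSet_Ioo hcM) hτt]
  congr 1
  refine setIntegral_congr_fun measurableSet_Ioo fun σ hσ => ?_
  have h := hΓ.kernelAverage_kernelAverage hF.of_uncurry_left (hFM σ hσ) (sub_pos.2 hσ.2)
    (sub_lt_sub_right htτ σ) x
  rwa [sub_sub_sub_cancel_right] at h

end IsTransitionDensity

end Kernel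

section Semigroup

variable {X : Type*} [TopologicalSpace X] [MeasurableSpace X]

structure IsKernelSemigroup (μ : Measure X) (Γ : X → X → ℝ → ℝ)
    (S : ℝ → (X →ᵇ ℝ) → (X →ᵇ ℝ)) : Prop where
  density : IsTransitionDensity μ Γ
  zero : ∀ φ, S 0 φ = φ
  apply_eq : ∀ φ t, 0 < t → ∀ x, S t φ x = kernelAverage μ Γ t φ x
  continuousOn : ∀ φ, ContinuousOn (fun t => S t φ) (Ici 0)

namespace IsKernelSemigroup

variable {μ : Measure X} {Γ : X → X → ℝ → ℝ} {S : ℝ → (X →ᵇ ℝ) → (X →ᵇ ℝ)} {t : ℝ}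

theorem apply_nonneg (hS : IsKernelSemigroup μ Γ S) (ht : 0 ≤ t) {φ : X →ᵇ ℝ}
    (hφ : ∀ x, 0 ≤ φ x) (x : X) : 0 ≤ S t φ x := by
  rcases ht.eq_or_lt with rfl | ht
  · rw [hS.zero]
    exact hφ x
  · rw [hS.apply_eq φ t ht]
    exact hS.density.kernelAverage_nonneg ht hφ x

theorem apply_pos [OpensMeasurableSpace X] [μ.IsOpenPosMeasure] (hS : IsKernelSemigroup μ Γ S)
    (ht : 0 < t) {φ : X →ᵇ ℝ} (hφ : ∀ x, 0 ≤ φ x) (hφ0 : φ ≠ 0) (x : X) : 0 < S t φ x := by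
  have hsupp : (Function.support φ).Nonempty := by
    by_contra! h
    exact hφ0 (DFunLike.coe_injective (Function.support_eq_empty_iff.1 h))
  rw [hS.apply_eq φ t ht]
  exact hS.density.kernelAverage_pos x ht φ.continuous.measurable.aestronglyMeasurable
    φ.norm_coe_le_norm hφ ((isOpen_compl_singleton.preimage φ.continuous).measure_ne_zero μ hsupp)

theorem lipschitzWith_one [OpensMeasurableSpace X] (hS : IsKernelSemigroup μ Γ S) (ht : 0 ≤ t) :
    LipschitzWith 1 (S t) := by
  refine LipschitzWith.of_dist_le_mul fun φ ψ => ?_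
  rw [NNReal.coe_one, one_mul]
  rcases ht.eq_or_lt with rfl | ht
  · rw [hS.zero, hS.zero]
  refine (BoundedContinuousFunction.dist_le dist_nonneg).2 fun x => ?_
  rw [Real.dist_eq, hS.apply_eq φ t ht, hS.apply_eq ψ t ht, ← hS.density.kernelAverage_sub x ht
    φ.continuous.measurable.aestronglyMeasurable φ.norm_coe_le_norm
    ψ.continuous.measurable.aestronglyMeasurable ψ.norm_coe_le_norm]
  exact hS.density.abs_kernelAverage_le x ht
    (φ.continuous.sub ψ.continuous).measurable.aestronglyMeasurable fun y =>
    BoundedContinuousFunction.dist_coe_le_dist (f := φ) (g := ψ) y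

theorem continuousOn_apply_sub [OpensMeasurableSpace X] (hS : IsKernelSemigroup μ Γ S)
    {u : ℝ → X →ᵇ ℝ} {τ : ℝ} (hu : ContinuousOn u (Icc 0 τ)) (x : X) :
    ContinuousOn (fun t => S (τ - t) (u t) x) (Icc 0 τ) := by
  have hjoint : ContinuousOn (fun p : ℝ × (X →ᵇ ℝ) => S p.1 p.2) (Ici 0 ×ˢ univ) :=
    continuousOn_prod_of_continuousOn_lipschitzOnWith' _ 1
      (fun t ht => (hS.lipschitzWith_one ht).lipschitzOnWith) fun φ _ => hS.continuousOn φ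
  refine (continuous_eval_const x).comp_continuousOn
    (hjoint.comp ((continuousOn_const.sub continuousOn_id).prodMk hu) fun t ht => ?_)
  exact ⟨sub_nonneg.2 ht.2, mem_univ _⟩

theorem mul_apply_le_kernelAverage (hS : IsKernelSemigroup μ Γ S) {g : ℝ → ℝ}
    (hJensen : ∀ v₀ : X →ᵇ ℝ, (∀ x, 0 ≤ v₀ x) → ∀ t > (0 : ℝ), ∀ x,
      g (S t v₀ x) ≤ kernelAverage μ Γ t (fun y => g (v₀ y)) x)
    {φ : X →ᵇ ℝ} (hφ : ∀ x, 0 ≤ φ x) (hgφ : Measurable fun y => g (φ y)) {c M : ℝ} (hc : 0 ≤ c)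
    {F : X → ℝ} (hF : Measurable F) (hFM : ∀ y, |F y| ≤ M)
    (hcF : ∀ y, 0 ≤ c * g (φ y) ∧ c * g (φ y) ≤ F y) (ht : 0 < t) (x : X) :
    c * g (S t φ x) ≤ kernelAverage μ Γ t F x :=
  calc c * g (S t φ x) ≤ c * kernelAverage μ Γ t (fun y => g (φ y)) x :=
        mul_le_mul_of_nonneg_left (hJensen φ hφ t ht x) hc
    _ = kernelAverage μ Γ t (fun y => c * g (φ y)) x := (kernelAverage_const_mul Γ t c _ x).symm
    _ ≤ kernelAverage μ Γ t F x :=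
        hS.density.kernelAverage_mono x ht (hgφ.const_mul c).aestronglyMeasurable
          (fun y => (abs_of_nonneg (hcF y).1).trans_le
            ((hcF y).2.trans ((le_abs_self _).trans (hFM y))))
          hF.aestronglyMeasurable hFM fun y => (hcF y).2

end IsKernelSemigroup

end Semigroup

structure IsNonnegContinuousOnIci (f : ℝ → ℝ) : Prop where
  continuousOn : ContinuousOn f (Ici 0)
  nonneg : ∀ s, 0 ≤ s → 0 ≤ f s

section Source

variable {X : Type*} [TopologicalSpace X] {h l f g : ℝ → ℝ} {u : ℝ → X →ᵇ ℝ}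

/-- The right-hand side of (P), frozen at its value at `σ = 0` for negative times so that it is
jointly continuous on all of `ℝ × X`. -/
def sourceTerm (h l f g : ℝ → ℝ) (u : ℝ → X →ᵇ ℝ) (σ : ℝ) (y : X) : ℝ :=
  h (max σ 0) * f (u (max σ 0) y) + l (max σ 0) * g (u (max σ 0) y)

theorem sourceTerm_of_nonneg {σ : ℝ} (hσ : 0 ≤ σ) (y : X) :
    sourceTerm h l f g u σ y = h σ * f (u σ y) + l σ * g (u σ y) := by
  simp only [sourceTerm, max_eq_left hσ]

theorem continuous_sourceTerm (hh : ContinuousOn h (Ici 0)) (hl : ContinuousOn l (Ici 0))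
    (hf : ContinuousOn f (Ici 0)) (hg : ContinuousOn g (Ici 0)) (hu : ContinuousOn u (Ici 0))
    (hu0 : ∀ t, 0 ≤ t → ∀ y, 0 ≤ u t y) :
    Continuous (Function.uncurry (sourceTerm h l f g u)) := by
  have hmax : Continuous fun σ : ℝ => max σ 0 := continuous_id.max continuous_const
  have hmem : ∀ σ : ℝ, max σ 0 ∈ Ici 0 := fun σ => le_max_right σ 0
  have hU : Continuous fun p : ℝ × X => u (max p.1 0) p.2 :=
    continuous_eval.comp (((hu.comp_continuous hmax hmem).comp continuous_fst).prodMk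
      continuous_snd)
  have hU0 : ∀ p : ℝ × X, u (max p.1 0) p.2 ∈ Ici 0 := fun p => hu0 _ (hmem p.1) p.2
  exact (((hh.comp_continuous hmax hmem).comp continuous_fst).mul (hf.comp_continuous hU hU0)).add
    (((hl.comp_continuous hmax hmem).comp continuous_fst).mul (hg.comp_continuous hU hU0))

theorem exists_abs_sourceTerm_le (hh : ContinuousOn h (Ici 0)) (hl : ContinuousOn l (Ici 0))
    (hf : ContinuousOn f (Ici 0)) (hg : ContinuousOn g (Ici 0)) {τ : ℝ}
    (hu : ContinuousOn u (Icc 0 τ)) (hu0 : ∀ t ∈ Icc 0 τ, ∀ y, 0 ≤ u t y) :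
    ∃ M, ∀ σ ∈ Icc 0 τ, ∀ y, |sourceTerm h l f g u σ y| ≤ M := by
  obtain ⟨R, hR⟩ := isCompact_Icc.exists_bound_of_continuousOn hu
  have hfst : MapsTo Prod.fst (Icc 0 τ ×ˢ Icc 0 R) (Ici 0) := fun p hp => hp.1.1
  have hsnd : MapsTo Prod.snd (Icc 0 τ ×ˢ Icc 0 R) (Ici 0) := fun p hp => hp.2.1
  have hΦ : ContinuousOn (fun p : ℝ × ℝ => h p.1 * f p.2 + l p.1 * g p.2)
      (Icc 0 τ ×ˢ Icc 0 R) :=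
    ((hh.comp continuousOn_fst hfst).mul (hf.comp continuousOn_snd hsnd)).add
      ((hl.comp continuousOn_fst hfst).mul (hg.comp continuousOn_snd hsnd))
  obtain ⟨M, hM⟩ := (isCompact_Icc.prod isCompact_Icc).exists_bound_of_continuousOn hΦ
  refine ⟨M, fun σ hσ y => ?_⟩
  rw [sourceTerm_of_nonneg hσ.1]
  exact hM (σ, u σ y) ⟨hσ, hu0 σ hσ y, (le_abs_self _).trans
    (((u σ).norm_coe_le_norm y).trans (hR σ hσ))⟩

end Source

namespace IsGlobalSolution

variable {N : ℕ} {Γ : EucN N → EucN N → ℝ → ℝ} {h l f g : ℝ → ℝ} {u₀ : CbN N} {u : ℝ → CbN N}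
  {S : ℝ → CbN N → CbN N}

theorem apply_eq_sourceTerm (hu : IsGlobalSolution N Γ h l f g u₀ u) {t : ℝ} (ht : 0 < t)
    (x : EucN N) :
    u t x = kernelAverage volume Γ t u₀ x +
      ∫ σ in 0..t, kernelAverage volume Γ (t - σ) (sourceTerm h l f g u σ) x := by
  have ⟨_, _, _, hmild⟩ := hu
  rw [hmild t ht x]
  congr 1
  refine intervalIntegral.integral_congr fun σ hσ => ?_
  simp only [kernelAverage, sourceTerm_of_nonneg (uIcc_of_le ht.le ▸ hσ).1]

theorem semigroup_apply_eq (hu : IsGlobalSolution N Γ h l f g u₀ u)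
    (hS : IsKernelSemigroup volume Γ S) (hF : Measurable (Function.uncurry (sourceTerm h l f g u)))
    {τ M : ℝ} (hFM : ∀ σ ∈ Icc 0 τ, ∀ y, |sourceTerm h l f g u σ y| ≤ M) {t : ℝ}
    (ht : t ∈ Icc 0 τ) (x : EucN N) :
    S (τ - t) (u t) x =
      S τ u₀ x + ∫ σ in 0..t, kernelAverage volume Γ (τ - σ) (sourceTerm h l f g u σ) x := by
  obtain ⟨ht0, htτ⟩ := ht
  rcases ht0.eq_or_lt with rfl | ht0
  · have ⟨_, hinit, _, _⟩ := hu
    simp [hinit]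
  rcases htτ.eq_or_lt with rfl | htτ
  · rw [sub_self, hS.zero, hu.apply_eq_sourceTerm ht0, hS.apply_eq u₀ t ht0]
  have hu_eq : ⇑(u t) = fun y => kernelAverage volume Γ t u₀ y +
      ∫ σ in 0..t, kernelAverage volume Γ (t - σ) (sourceTerm h l f g u σ) y :=
    funext (hu.apply_eq_sourceTerm ht0)
  rw [hS.apply_eq _ _ (sub_pos.2 htτ), hS.apply_eq _ _ (ht0.trans htτ), kernelAverage, hu_eq]
  exact hS.density.kernelAverage_duhamel u₀.continuous.measurable u₀.norm_coe_le_norm hF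
    (fun σ hσ => hFM σ ⟨hσ.1.le, hσ.2.le.trans htτ.le⟩) ht0 htτ x

theorem add_integral_le_semigroup_apply (hu : IsGlobalSolution N Γ h l f g u₀ u)
    (hS : IsKernelSemigroup volume Γ S) (hh : IsNonnegContinuousOnIci h)
    (hl : IsNonnegContinuousOnIci l) (hf : IsNonnegContinuousOnIci f)
    (hg : IsNonnegContinuousOnIci g)
    (hJensen : ∀ v₀ : CbN N, (∀ x, 0 ≤ v₀ x) → ∀ t > (0 : ℝ), ∀ x,
      g (S t v₀ x) ≤ kernelAverage volume Γ t (fun y => g (v₀ y)) x)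
    {τ t : ℝ} (ht : t ∈ Icc 0 τ) (x : EucN N) :
    S τ u₀ x + ∫ σ in 0..t, l σ * g (S (τ - σ) (u σ) x) ≤ S (τ - t) (u t) x := by
  have ⟨hucont, _, hu0, _⟩ := hu
  have hF : Measurable (Function.uncurry (sourceTerm h l f g u)) :=
    (continuous_sourceTerm hh.1 hl.1 hf.1 hg.1 hucont hu0).measurable
  obtain ⟨M, hM⟩ := exists_abs_sourceTerm_le hh.1 hl.1 hf.1 hg.1
    (hucont.mono Icc_subset_Ici_self) (fun t ht => hu0 t ht.1)
  rw [hu.semigroup_apply_eq hS hF hM ht x]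
  have hsub : Icc 0 t ⊆ Icc 0 τ := Icc_subset_Icc_right ht.2
  refine add_le_add le_rfl
    (intervalIntegral.integral_mono_on_of_le_Ioo ht.1 ?_ ?_ fun σ hσ => ?_)
  · refine ContinuousOn.intervalIntegrable_of_Icc ht.1 ((hl.1.mono Icc_subset_Ici_self).mul ?_)
    exact hg.1.comp ((hS.continuousOn_apply_sub (hucont.mono Icc_subset_Ici_self) x).mono hsub)
      fun σ hσ => hS.apply_nonneg (sub_nonneg.2 (hsub hσ).2) (hu0 σ hσ.1) x
  · have hD : Measurable fun σ => kernelAverage volume Γ (τ - σ) (sourceTerm h l f g u σ) x :=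
      (hS.density.measurable_kernelAverage hF (measurable_const.sub measurable_id)).comp
        (measurable_id.prodMk measurable_const)
    refine (intervalIntegrable_iff_integrableOn_Ioo_of_le (μ := volume) ht.1).2
      (.of_bound measure_Ioo_lt_top hD.aestronglyMeasurable M
        (ae_restrict_of_forall_mem measurableSet_Ioo fun σ hσ => ?_))
    exact hS.density.abs_kernelAverage_le x (sub_pos.2 (hσ.2.trans_le ht.2))
      hF.of_uncurry_left.aestronglyMeasurable (hM σ ⟨hσ.1.le, hσ.2.le.trans ht.2⟩)
  · have hσ' : σ ∈ Icc 0 τ := ⟨hσ.1.le, hσ.2.le.trans ht.2⟩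
    refine hS.mul_apply_le_kernelAverage hJensen (hu0 σ hσ'.1)
      (hg.1.comp_continuous (u σ).continuous (hu0 σ hσ'.1)).measurable (hl.2 σ hσ'.1)
      hF.of_uncurry_left (hM σ hσ') (fun y => ?_) (sub_pos.2 (hσ.2.trans_le ht.2)) x
    rw [sourceTerm_of_nonneg hσ'.1]
    exact ⟨mul_nonneg (hl.2 σ hσ'.1) (hg.2 _ (hu0 σ hσ'.1 y)), le_add_of_nonneg_left
      (mul_nonneg (hh.2 σ hσ'.1) (hf.2 _ (hu0 σ hσ'.1 y)))⟩

end IsGlobalSolution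

theorem nonglobal_existence_g_general
    (N : ℕ) (α : ℝ)
    (Γ : EucN N → EucN N → ℝ → ℝ)
    (hΓmeas : Measurable fun p : EucN N × EucN N × ℝ => Γ p.1 p.2.1 p.2.2)
    (c₀ : ℝ)
    (hK1y : ∀ (x : EucN N) (t : ℝ), 0 < t → ∫ y, Γ x y t = 1)
    (hK2 : ∀ (x y : EucN N) (s t : ℝ), 0 < s → s < t →
      Γ x y t = ∫ ξ, Γ x ξ (t - s) * Γ ξ y s)
    (hK5 : ∀ (x y : EucN N) (t : ℝ), 0 < t →
      0 < Γ x y t ∧ Γ x y t ≤ c₀ * t ^ (-(N : ℝ) / (2 - α)))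
    (S : ℝ → CbN N → CbN N)
    (hS0 : ∀ φ, S 0 φ = φ)
    (hSΓ : ∀ (φ : CbN N) (t : ℝ), 0 < t → ∀ x, S t φ x = ∫ y, Γ x y t * φ y)
    (hK4 : ∀ φ : CbN N, ContinuousOn (fun t => S t φ) (Ici (0 : ℝ)))
    (h l : ℝ → ℝ)
    (hhcont : ContinuousOn h (Ici 0)) (hlcont : ContinuousOn l (Ici 0))
    (hhnn : ∀ t, 0 ≤ t → 0 ≤ h t) (hlnn : ∀ t, 0 ≤ t → 0 ≤ l t)
    (f g : ℝ → ℝ)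
    (hfLip : ∀ M > (0 : ℝ), ∃ K : NNReal, LipschitzOnWith K f (Icc 0 M))
    (hgLip : ∀ M > (0 : ℝ), ∃ K : NNReal, LipschitzOnWith K g (Icc 0 M))
    (hfnn : ∀ s, 0 ≤ s → 0 ≤ f s) (hgnn : ∀ s, 0 ≤ s → 0 ≤ g s)
    (u₀ : CbN N) (hu₀nn : ∀ x, 0 ≤ u₀ x) (hu₀ne : u₀ ≠ 0)
    -- `g ∈ Φ`:
    (hgOsgood : ∀ z > (0 : ℝ), IntegrableOn (fun σ => 1 / g σ) (Ioi z))
    (hgJensen : ∀ v₀ : CbN N, (∀ x, 0 ≤ v₀ x) → ∀ t > (0 : ℝ), ∀ x,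
      g (S t v₀ x) ≤ ∫ y, Γ x y t * g (v₀ y))
    (hgmono : MonotoneOn g (Ici 0)) (hgpos : ∀ s > (0 : ℝ), 0 < g s)
    -- the blow-up condition:
    (τ : ℝ) (hτ : 0 < τ)
    (hcond : (∫ σ in Ioi ‖S τ u₀‖, 1 / g σ) ≤ ∫ σ in (0 : ℝ)..τ, l σ) :
    ¬ ∃ u : ℝ → CbN N, IsGlobalSolution N Γ h l f g u₀ u := by
  rintro ⟨u, hu⟩
  have ⟨hucont, _, hunn, _⟩ := hu
  have hS : IsKernelSemigroup volume Γ S :=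
    ⟨⟨hΓmeas, fun x y t ht => (hK5 x y t ht).1, hK1y, hK2⟩, hS0, hSΓ, hK4⟩
  have hf : IsNonnegContinuousOnIci f := ⟨continuousOn_Ici_of_lipschitzOnWith_Icc hfLip, hfnn⟩
  have hg : IsNonnegContinuousOnIci g := ⟨continuousOn_Ici_of_lipschitzOnWith_Icc hgLip, hgnn⟩
  have hpos : ∀ x, 0 < S τ u₀ x := hS.apply_pos hτ hu₀nn hu₀ne
  obtain ⟨δ, hδ, hlt⟩ := exists_forall_setIntegral_Ioc_lt_setIntegral_Ioi hgmono hgpos hgOsgood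
    ((hpos 0).trans_le ((S τ u₀).apply_le_norm 0)) ‖u τ‖
  obtain ⟨x, hx⟩ := (S τ u₀).exists_norm_sub_lt_apply (fun x => (hpos x).le) hδ
  have hgrowth := integral_le_setIntegral_inv_of_add_integral_le (hpos x) hτ.le hg.1 hgnn hgmono
    hgpos (hlcont.mono Icc_subset_Ici_self) (fun t ht => hlnn t ht.1)
    (hS.continuousOn_apply_sub (hucont.mono Icc_subset_Ici_self) x)
    (fun t ht => hS.apply_nonneg (sub_nonneg.2 ht.2) (hunn t ht.1) x)
    fun t ht => hu.add_integral_le_semigroup_apply hS ⟨hhcont, hhnn⟩ ⟨hlcont, hlnn⟩ hf hg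
      hgJensen ht x
  rw [sub_self, hS.zero] at hgrowth
  exact (hcond.trans hgrowth).not_gt
    (hlt _ ⟨hx, (S τ u₀).apply_le_norm x⟩ _ ((u τ).apply_le_norm x))

/-- Theorem 1.2(ii)(b): if `g ∈ Φ` and the Osgood-type integral condition
holds at some time `τ > 0`, there is no global solution with data `u₀`. -/
theorem nonglobal_existence_g
    (N : ℕ) (hN : 1 ≤ N) (α : ℝ) (hα0 : 0 ≤ α) (hα1 : α < 1)
    (Γ : EucN N → EucN N → ℝ → ℝ)
    (hΓmeas : Measurable fun p : EucN N × EucN N × ℝ => Γ p.1 p.2.1 p.2.2)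
    (c₀ : ℝ) (hc₀ : 0 < c₀)
    (hK1y : ∀ (x : EucN N) (t : ℝ), 0 < t → ∫ y, Γ x y t = 1)
    (hK1x : ∀ (y : EucN N) (t : ℝ), 0 < t → ∫ x, Γ x y t = 1)
    (hK2 : ∀ (x y : EucN N) (s t : ℝ), 0 < s → s < t →
      Γ x y t = ∫ ξ, Γ x ξ (t - s) * Γ ξ y s)
    (hK5 : ∀ (x y : EucN N) (t : ℝ), 0 < t →
      0 < Γ x y t ∧ Γ x y t ≤ c₀ * t ^ (-(N : ℝ) / (2 - α)))
    (S : ℝ → CbN N → CbN N)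
    (hS0 : ∀ φ, S 0 φ = φ)
    (hSΓ : ∀ (φ : CbN N) (t : ℝ), 0 < t → ∀ x, S t φ x = ∫ y, Γ x y t * φ y)
    (hK4 : ∀ φ : CbN N, ContinuousOn (fun t => S t φ) (Ici (0 : ℝ)))
    (h l : ℝ → ℝ)
    (hhcont : ContinuousOn h (Ici 0)) (hlcont : ContinuousOn l (Ici 0))
    (hhnn : ∀ t, 0 ≤ t → 0 ≤ h t) (hlnn : ∀ t, 0 ≤ t → 0 ≤ l t)
    (f g : ℝ → ℝ)
    (hfLip : ∀ M > (0 : ℝ), ∃ K : NNReal, LipschitzOnWith K f (Icc 0 M))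
    (hgLip : ∀ M > (0 : ℝ), ∃ K : NNReal, LipschitzOnWith K g (Icc 0 M))
    (hfnn : ∀ s, 0 ≤ s → 0 ≤ f s) (hgnn : ∀ s, 0 ≤ s → 0 ≤ g s)
    (hf0 : f 0 = 0) (hg0 : g 0 = 0)
    (u₀ : CbN N) (hu₀nn : ∀ x, 0 ≤ u₀ x) (hu₀ne : u₀ ≠ 0)
    -- `g ∈ Φ`:
    (hgOsgood : ∀ z > (0 : ℝ), IntegrableOn (fun σ => 1 / g σ) (Ioi z))
    (hgJensen : ∀ v₀ : CbN N, (∀ x, 0 ≤ v₀ x) → ∀ t > (0 : ℝ), ∀ x,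
      g (S t v₀ x) ≤ ∫ y, Γ x y t * g (v₀ y))
    (hgmono : MonotoneOn g (Ici 0)) (hgpos : ∀ s > (0 : ℝ), 0 < g s)
    -- the blow-up condition:
    (τ : ℝ) (hτ : 0 < τ)
    (hcond : (∫ σ in Ioi ‖S τ u₀‖, 1 / g σ) ≤ ∫ σ in (0 : ℝ)..τ, l σ) :
    ¬ ∃ u : ℝ → CbN N, IsGlobalSolution N Γ h l f g u₀ u :=
  nonglobal_existence_g_general N α Γ hΓmeas c₀ hK1y hK2 hK5 S hS0 hSΓ hK4 h l hhcont hlcont hhnn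
    hlnn f g hfLip hgLip hfnn hgnn u₀ hu₀nn hu₀ne hgOsgood hgJensen hgmono hgpos τ hτ hcond
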